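/- Let p be a prime, k ≥ 1, and let w be a recurrent infinite word over ℕ. Then for every m ≥ 0: φ_k(A_{w_m}) · U_k(T^m w) = U_k(w), where the left-hand side is the set { φ_k(A_{w_m})·M : M ∈ U_k(T^m w) }. -/

import Mathlib

open Matrix Filter

/-- The matrix `A_a = [[0,1],[1,a]]` associated to a letter `a`. -/
def Amat (a : ℕ) : Matrix (Fin 2) (Fin 2) ℤ := !![0, 1; 1, (a : ℤ)]

/-- The matrix `A_u` associated to a finite word `u` (product of the `A_a`). -/
def Aword (u : List ℕ) : Matrix (Fin 2) (Fin 2) ℤ := (u.map Amat).prod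

/-- The prefix of length `n` of an infinite word `w`. -/
def wordPrefix (w : ℕ → ℕ) (n : ℕ) : List ℕ := (List.range n).map w

/-- The left shift `T^m w` of an infinite word. -/
def shiftW (w : ℕ → ℕ) (m : ℕ) : ℕ → ℕ := fun i => w (m + i)

/-- Distance from a real number to the nearest integer. -/
noncomputable def distNearestInt (t : ℝ) : ℝ := |t - round t|

/-- `q ∈ PBad_ε` : `q` is a `p`-adically badly approximable vector with constant `ε`. -/
def PBadE (p : ℕ) [Fact p.Prime] (ε : ℝ) (q : Fin 2 → ℚ_[p]) : Prop :=
  ∀ a b : ℤ, ¬(a = 0 ∧ b = 0) →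
    ε / max ((a : ℝ) ^ 2) ((b : ℝ) ^ 2) ≤
      ‖(a : ℚ_[p]) * q 0 + (b : ℚ_[p]) * q 1‖ / max ‖q 0‖ ‖q 1‖

/-- An integer matrix viewed as a matrix over `ℚ_[p]`. -/
noncomputable def matQ (p : ℕ) [Fact p.Prime] (M : Matrix (Fin 2) (Fin 2) ℤ) :
    Matrix (Fin 2) (Fin 2) ℚ_[p] := M.map Int.cast

/-- `(w, y) ∈ LMad_ε`. -/
def LMadE (p : ℕ) [Fact p.Prime] (ε : ℝ) (w : ℕ → ℕ) (y : Fin 2 → ℚ_[p]) : Prop :=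
  (∀ n, 1 ≤ w n ∧ (w n : ℤ) ≤ ⌊ε⁻¹⌋ + 1) ∧
  ∀ n : ℕ, PBadE p ε (Matrix.mulVec (matQ p (Aword (wordPrefix w n))ᵀ) y)

/-- `(w, y) ∈ LMad`. -/
def LMad (p : ℕ) [Fact p.Prime] (w : ℕ → ℕ) (y : Fin 2 → ℚ_[p]) : Prop :=
  ∃ ε > 0, LMadE p ε w y

/-- The projective distance `d` on nonzero vectors of `ℚ_[p]²`. -/
noncomputable def pdist (p : ℕ) [Fact p.Prime] (u v : Fin 2 → ℚ_[p]) : ℝ :=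
  ‖u 0 * v 1 - u 1 * v 0‖ / (max ‖u 0‖ ‖u 1‖ * max ‖v 0‖ ‖v 1‖)

/-- `q ∈ B_k(w, y)` : `q` is `p^{-k}`-close to some `(A_{w_n})ᵀ y`. -/
def inBk (p : ℕ) [Fact p.Prime] (k : ℕ) (w : ℕ → ℕ) (y : Fin 2 → ℚ_[p])
    (q : Fin 2 → ℚ_[p]) : Prop :=
  q ≠ 0 ∧ ∃ n : ℕ,
    pdist p q (Matrix.mulVec (matQ p (Aword (wordPrefix w n))ᵀ) y) ≤ (p : ℝ) ^ (-(k : ℤ))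

/-- `U_k(w)` : set of reductions mod `p^k` of the matrices of all prefixes of `w`. -/
def Uk (p k : ℕ) (w : ℕ → ℕ) : Set (Matrix (Fin 2) (Fin 2) (ZMod (p ^ k))) :=
  { M | ∃ n : ℕ, M = (Aword (wordPrefix w n)).map Int.cast }

/-- The finite word `u` occurs in `w` at position `m`. -/
def occursAt (w : ℕ → ℕ) (u : List ℕ) (m : ℕ) : Prop :=
  u = (List.range u.length).map fun i => w (m + i)

/-- `u` is a factor of the infinite word `w`. -/
def IsFactor (u : List ℕ) (w : ℕ → ℕ) : Prop := ∃ m, occursAt w u m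

/-- `w` is recurrent: every factor occurs infinitely often. -/
def Recurrent (w : ℕ → ℕ) : Prop :=
  ∀ u : List ℕ, IsFactor u w → ∀ M : ℕ, ∃ m, M ≤ m ∧ occursAt w u m

/-- `w` is uniformly recurrent: recurrent with bounded gaps between occurrences. -/
def UniformlyRecurrent (w : ℕ → ℕ) : Prop :=
  Recurrent w ∧
    ∀ u : List ℕ, IsFactor u w →
      ∃ d : ℕ, ∀ m : ℕ, ∃ m', m ≤ m' ∧ m' ≤ m + d ∧ occursAt w u m'

/-- The complexity `P(w, n)` : number of distinct factors of `w` of length `n`. -/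
noncomputable def complexity (w : ℕ → ℕ) (n : ℕ) : ℕ :=
  Set.ncard { u : List ℕ | u.length = n ∧ IsFactor u w }

/-- `a` is the sequence of partial quotients of the continued fraction expansion of `x`,
obtained by iterating the Gauss map. -/
def IsCFSeq (x : ℝ) (a : ℕ → ℕ) : Prop :=
  ∃ ξ : ℕ → ℝ, ξ 0 = x ∧
    ∀ n, (0 < ξ n ∧ ξ n < 1) ∧ ((a n : ℤ) = ⌊(ξ n)⁻¹⌋) ∧ ξ (n + 1) = (ξ n)⁻¹ - (a n : ℝ)

/-- `Q` is the (index-shifted) sequence of denominators of the convergents of the continued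
fraction with partial quotients `a` : `Q (n+1)` is the paper's `q_n`. -/
def IsCFDen (a : ℕ → ℕ) (Q : ℕ → ℤ) : Prop :=
  Q 0 = 0 ∧ Q 1 = 1 ∧ ∀ n, Q (n + 2) = (a n : ℤ) * Q (n + 1) + Q n

/-!
Reduced modulo `p ^ k`, the matrices `A_u` live in a finite monoid, they are invertible there
(`det A_u = ±1`), and `u ↦ φ_k(A_u)` turns concatenation into multiplication. Starting from
`s₀ = n`, recurrence lets us put `s_{i+1} = r_i + s_i`, where `r_i ≥ m` is an occurrence of the
prefix of length `s_i`. By pigeonhole `φ_k(A_{w_{s_i}}) = φ_k(A_{w_{s_j}})` for some `i < j`;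
the block between the two is an occurrence `D ≥ m` of the prefix of length `s_i`, so cancelling
gives `φ_k(A_{w_D}) = 1`, and then `t = D + n` satisfies `φ_k(A_{w_t}) = φ_k(A_{w_n})`.
-/

lemma occursAt_wordPrefix_iff {w : ℕ → ℕ} {L s : ℕ} :
    occursAt w (wordPrefix w L) s ↔ ∀ i < L, w (s + i) = w i := by
  simp only [occursAt, wordPrefix, List.length_map, List.length_range, List.map_eq_map_iff,
    List.mem_range, eq_comm]

lemma occursAt_wordPrefix_zero (w : ℕ → ℕ) (L : ℕ) : occursAt w (wordPrefix w L) 0 :=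
  occursAt_wordPrefix_iff.2 fun i _ => by rw [Nat.zero_add]

lemma occursAt_wordPrefix_add {w : ℕ → ℕ} {K L s t : ℕ}
    (hs : occursAt w (wordPrefix w L) s) (ht : occursAt w (wordPrefix w K) t) (hKL : t + K ≤ L) :
    occursAt w (wordPrefix w K) (s + t) := by
  rw [occursAt_wordPrefix_iff] at hs ht ⊢
  intro i hi
  rw [Nat.add_assoc, hs (t + i) (by omega), ht i hi]

lemma wordPrefix_add (w : ℕ → ℕ) (m j : ℕ) :
    wordPrefix w (m + j) = wordPrefix w m ++ wordPrefix (shiftW w m) j := by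
  rw [wordPrefix, List.range_add, List.map_append, List.map_map]
  rfl

lemma wordPrefix_add_of_occursAt {w : ℕ → ℕ} {L s j : ℕ}
    (hs : occursAt w (wordPrefix w L) s) (hj : j ≤ L) :
    wordPrefix w (s + j) = wordPrefix w s ++ wordPrefix w j := by
  rw [wordPrefix_add]
  congr 1
  simp only [wordPrefix, shiftW, List.map_eq_map_iff, List.mem_range]
  exact fun i hi => occursAt_wordPrefix_iff.1 hs i (by omega)

section Monoid

variable {G : Type*} [Monoid G] [Finite G] (f : List ℕ → G)
  (hf : ∀ u v, f (u ++ v) = f u * f v) (hunit : ∀ u, IsUnit (f u))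
include hf hunit

theorem Recurrent.exists_ge_map_wordPrefix_eq {w : ℕ → ℕ} (hrec : Recurrent w) (n m : ℕ) :
    ∃ t, m ≤ t ∧ f (wordPrefix w t) = f (wordPrefix w n) := by
  choose r hr_ge hr_occ using fun L => hrec (wordPrefix w L) ⟨0, occursAt_wordPrefix_zero w L⟩ m
  let s : ℕ → ℕ := fun i => Nat.rec n (fun _ si => r si + si) i
  have hs_succ (i : ℕ) : s (i + 1) = r (s i) + s i := rfl
  have hn_le (i : ℕ) : n ≤ s i :=
    (monotone_nat_of_le_succ fun i => (hs_succ i).symm ▸ Nat.le_add_left _ _) (Nat.zero_le i)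
  have block (i j : ℕ) (hij : i < j) :
      ∃ D, m ≤ D ∧ occursAt w (wordPrefix w (s i)) D ∧ D + s i = s j := by
    induction j, hij using Nat.le_induction with
    | base => exact ⟨r (s i), hr_ge _, hr_occ _, (hs_succ i).symm⟩
    | succ j _ ih =>
      obtain ⟨D, hmD, hD, hDs⟩ := ih
      exact ⟨r (s j) + D, le_add_left hmD,
        occursAt_wordPrefix_add (hr_occ (s j)) hD (by omega), by rw [hs_succ]; omega⟩
  obtain ⟨i, j, hij, hfij⟩ := Set.finite_univ.exists_lt_map_eq_of_forall_mem
    (f := fun i => f (wordPrefix w (s i))) (fun _ => Set.mem_univ _)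
  obtain ⟨D, hmD, hD, hDs⟩ := block i j hij
  have hfD : f (wordPrefix w D) = 1 := by
    refine (hunit (wordPrefix w (s i))).mul_right_cancel ?_
    rw [one_mul, ← hf, ← wordPrefix_add_of_occursAt hD le_rfl, hDs]
    exact hfij.symm
  refine ⟨D + n, by omega, ?_⟩
  rw [wordPrefix_add_of_occursAt hD (hn_le i), hf, hfD, one_mul]

end Monoid

lemma Aword_append (u v : List ℕ) : Aword (u ++ v) = Aword u * Aword v := by
  simp [Aword]

lemma det_Aword (u : List ℕ) : (Aword u).det = (-1) ^ u.length := by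
  induction u with
  | nil => simp [Aword]
  | cons a u ih =>
    rw [show Aword (a :: u) = Amat a * Aword u by simp [Aword], det_mul, ih,
      List.length_cons, pow_succ']
    simp [Amat, det_fin_two_of]

lemma isUnit_map_Aword {R : Type*} [CommRing R] (u : List ℕ) :
    IsUnit ((Int.castRingHom R).mapMatrix (Aword u)) := by
  rw [isUnit_iff_isUnit_det, ← RingHom.map_det, det_Aword, map_pow, map_neg, map_one]
  exact isUnit_one.neg.pow _

theorem stmt_12_general (p : ℕ) [Fact p.Prime] (k : ℕ)
    (w : ℕ → ℕ) (hrec : Recurrent w) (m : ℕ) :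
    (fun M : Matrix (Fin 2) (Fin 2) (ZMod (p ^ k)) =>
        ((Aword (wordPrefix w m)).map (Int.cast : ℤ → ZMod (p ^ k))) * M) ''
      Uk p k (shiftW w m) = Uk p k w := by
  have : NeZero (p ^ k) := ⟨pow_ne_zero k (Fact.out : p.Prime).ne_zero⟩
  let φ := (Int.castRingHom (ZMod (p ^ k))).mapMatrix (m := Fin 2)
  have hφ (u v : List ℕ) : φ (Aword (u ++ v)) = φ (Aword u) * φ (Aword v) := by
    rw [Aword_append, map_mul]
  ext M
  constructor
  · rintro ⟨_, ⟨j, rfl⟩, rfl⟩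
    exact ⟨m + j, by rw [wordPrefix_add]; exact (hφ _ _).symm⟩
  · rintro ⟨n, rfl⟩
    obtain ⟨t, hmt, ht⟩ := hrec.exists_ge_map_wordPrefix_eq (fun u => φ (Aword u)) hφ
      (fun u => isUnit_map_Aword u) n m
    refine ⟨_, ⟨t - m, rfl⟩, ?_⟩
    rw [← Nat.add_sub_cancel' hmt, wordPrefix_add, hφ] at ht
    exact ht

/-- for a recurrent word `w`, `φ_k(A_{w_m}) · U_k(T^m w) = U_k(w)`. -/
theorem stmt_12 (p : ℕ) [Fact p.Prime] (k : ℕ) (hk : 1 ≤ k)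
    (w : ℕ → ℕ) (hrec : Recurrent w) (m : ℕ) :
    (fun M : Matrix (Fin 2) (Fin 2) (ZMod (p ^ k)) =>
        ((Aword (wordPrefix w m)).map (Int.cast : ℤ → ZMod (p ^ k))) * M) ''
      Uk p k (shiftW w m) = Uk p k w :=
  stmt_12_general p k w hrec m
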